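/- Let L > 0 and μ > 0, and let β₁ ∈ (0,π) be the smallest positive root of cot(β) = (β² − μ²L²)/(2Lβμ). Writing β₁ = π − δ, one has δ = 2π/(μL) + O(μ^{-2}) as μ → ∞; in particular π − β₁ ≤ C/μ for a constant C depending only on L and all sufficiently large μ. -/

import Mathlib

/-! With `δ = π - β₁` and `x = 2π/(μL)` the equation reads
`cot δ = π/(x(π - δ)) - x(π - δ)/(4π)`. Its left side decreases and its right side increases
in `δ` on `(0, π)`, so the root is trapped between any two points where the sign of the
difference is known. The elementary bounds `cot y ≤ 1/y` and `cot y ≥ (1 - y²/2)/y` give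
these signs at `δ = x ± x²` once `x ≤ 1/4`, hence `|δ - x| ≤ x²`. -/

open Real Filter Asymptotics
open Set

/-- The equation `cot b = (b² - m²)/(2mb)` (with `m = μL`) is `robinSecular m b = 0`. -/
noncomputable def robinSecular (m b : ℝ) : ℝ := cos b / sin b + (m / (2 * b) - b / (2 * m))

lemma cos_div_sin_antitoneOn : AntitoneOn (fun x => cos x / sin x) (Ioo 0 π) := by
  intro a ha b hb hab
  have hcot : ∀ x, cos x / sin x = tan (π / 2 - x) := fun x => by
    rw [tan_eq_sin_div_cos, sin_pi_div_two_sub, cos_pi_div_two_sub]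
  simp only [hcot]
  exact strictMonoOn_tan.monotoneOn ⟨by linarith [hb.2], by linarith [hb.1]⟩
    ⟨by linarith [ha.2], by linarith [ha.1]⟩ (by linarith)

lemma cos_div_sin_le_inv {x : ℝ} (hx0 : 0 < x) (hx : x < π / 2) : cos x / sin x ≤ x⁻¹ := by
  rw [← inv_div, ← tan_eq_sin_div_cos]
  exact inv_anti₀ hx0 (lt_tan hx0 hx).le

lemma one_sub_sq_div_two_div_le_cos_div_sin {x : ℝ} (hx0 : 0 < x) (hx : x ≤ π / 2) :
    (1 - x ^ 2 / 2) / x ≤ cos x / sin x :=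
  div_le_div₀ (cos_nonneg_of_mem_Icc ⟨by linarith, hx⟩) one_sub_sq_div_two_le_cos
    (sin_pos_of_pos_of_lt_pi hx0 (by linarith)) (sin_le hx0.le)

lemma robinSecular_antitoneOn {m : ℝ} (hm : 0 < m) : AntitoneOn (robinSecular m) (Ioo 0 π) := by
  intro a ha b hb hab
  have hcot := cos_div_sin_antitoneOn ha hb hab
  have hinv : m / (2 * b) ≤ m / (2 * a) := by gcongr; linarith [ha.1]
  have hlin : a / (2 * m) ≤ b / (2 * m) := by gcongr
  simp only [robinSecular] at hcot ⊢
  linarith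

lemma robinSecular_eq_zero {m b : ℝ} (hm : m ≠ 0) (hb : b ≠ 0)
    (h : cos b / sin b = (b ^ 2 - m ^ 2) / (2 * m * b)) : robinSecular m b = 0 := by
  rw [robinSecular, h]
  field_simp
  ring

lemma robinSecular_two_pi_div {x b : ℝ} (hx : x ≠ 0) (hb : b ≠ 0) :
    robinSecular (2 * π / x) b = cos b / sin b + π / (x * b) - x * b / (4 * π) := by
  have hπ := pi_ne_zero
  rw [robinSecular]
  field_simp
  ring

lemma robinSecular_pi_sub_add_sq_pos {x : ℝ} (hx0 : 0 < x) (hx : x ≤ 1 / 4) :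
    0 < robinSecular (2 * π / x) (π - (x + x ^ 2)) := by
  have hπ := pi_gt_three
  have hcot : cos (x + x ^ 2) / sin (x + x ^ 2) ≤ 1 / x - 4 / 5 :=
    calc cos (x + x ^ 2) / sin (x + x ^ 2) ≤ (x + x ^ 2)⁻¹ :=
          cos_div_sin_le_inv (by positivity) (by nlinarith)
      _ ≤ 1 / x - 4 / 5 := by
          rw [inv_le_iff_one_le_mul₀' (by positivity),
            show (x + x ^ 2) * (1 / x - 4 / 5) = 1 + x * (1 - 4 * x) / 5 by field_simp; ring]
          nlinarith
  have hinv : 1 / x ≤ π / (x * (π - (x + x ^ 2))) := by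
    rw [div_le_div_iff₀ hx0 (mul_pos hx0 (by nlinarith))]
    nlinarith
  have hlin : x * (π - (x + x ^ 2)) / (4 * π) ≤ x / 4 := by
    rw [div_le_div_iff₀ (by positivity) (by norm_num)]
    nlinarith
  rw [robinSecular_two_pi_div hx0.ne' (by nlinarith), cos_pi_sub, sin_pi_sub, neg_div]
  linarith

lemma robinSecular_pi_sub_sub_sq_neg {x : ℝ} (hx0 : 0 < x) (hx : x ≤ 1 / 4) :
    robinSecular (2 * π / x) (π - (x - x ^ 2)) < 0 := by
  have hπ := pi_gt_three
  set y := x - x ^ 2 with hy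
  have hy0 : 0 < y := by nlinarith
  have hyx : y ≤ x := by nlinarith
  have hcot : π / (x * (π - y)) < cos y / sin y :=
    calc π / (x * (π - y)) < (1 - y ^ 2 / 2) / y := by
          have hgap : 0 < π * x - y - π * y ^ 2 / 2 := by
            nlinarith [mul_le_mul hyx hyx hy0.le hx0.le]
          rw [div_lt_div_iff₀ (mul_pos hx0 (by linarith)) hy0]
          nlinarith [mul_pos hx0 hgap, mul_pos hx0 (pow_pos hy0 3)]
      _ ≤ cos y / sin y := one_sub_sq_div_two_div_le_cos_div_sin hy0 (by linarith)
  have hlin : 0 < x * (π - y) / (4 * π) := div_pos (mul_pos hx0 (by linarith)) (by positivity)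
  rw [robinSecular_two_pi_div hx0.ne' (by linarith), cos_pi_sub, sin_pi_sub, neg_div]
  linarith

lemma abs_pi_sub_sub_le_sq_of_robinSecular_eq_zero {x b : ℝ} (hx0 : 0 < x) (hx : x ≤ 1 / 4)
    (hb : b ∈ Ioo 0 π) (hroot : robinSecular (2 * π / x) b = 0) : |π - b - x| ≤ x ^ 2 := by
  have hπ := pi_gt_three
  have hanti := robinSecular_antitoneOn (m := 2 * π / x) (by positivity)
  rw [abs_le]
  constructor
  · by_contra! h
    have := hanti ⟨by nlinarith, by nlinarith⟩ hb (by linarith : π - (x - x ^ 2) ≤ b)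
    linarith [robinSecular_pi_sub_sub_sq_neg hx0 hx]
  · by_contra! h
    have := hanti hb ⟨by nlinarith, by nlinarith⟩ (by linarith : b ≤ π - (x + x ^ 2))
    linarith [robinSecular_pi_sub_add_sq_pos hx0 hx]

/-- Asymptotics of the smallest positive root β₁(μ) ∈ (0,π) of cot β = (β² - μ²L²)/(2Lβμ):
writing β₁ = π - δ one has δ = 2π/(μL) + O(μ⁻²) as μ → ∞; in particular π - β₁ ≤ C/μ for
a constant C and all sufficiently large μ. -/
theorem first_robin_root_asymptotics (L : ℝ) (hL : 0 < L) (β : ℝ → ℝ)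
    (hβ : ∀ μ : ℝ, 0 < μ →
      IsLeast {b : ℝ | 0 < b ∧
        Real.cos b / Real.sin b = (b^2 - μ^2 * L^2) / (2 * L * b * μ)} (β μ) ∧ β μ < π) :
    (fun μ : ℝ => (π - β μ) - 2 * π / (μ * L)) =O[atTop] (fun μ : ℝ => 1 / μ^2) ∧
    ∃ C > 0, ∀ᶠ μ : ℝ in atTop, π - β μ ≤ C / μ := by
  have hbound : ∀ᶠ μ : ℝ in atTop, 0 < μ ∧ 2 * π / (μ * L) ≤ 1 / 4 ∧
      |π - β μ - 2 * π / (μ * L)| ≤ (2 * π / (μ * L)) ^ 2 := by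
    filter_upwards [eventually_gt_atTop (8 * π / L)] with μ hμ
    have hμ0 : 0 < μ := (by positivity : 0 < 8 * π / L).trans hμ
    have hx : 2 * π / (μ * L) ≤ 1 / 4 := by
      rw [div_lt_iff₀ hL] at hμ
      rw [div_le_iff₀ (by positivity)]
      linarith
    obtain ⟨⟨⟨hb0, heq⟩, -⟩, hbπ⟩ := hβ μ hμ0
    refine ⟨hμ0, hx,
      abs_pi_sub_sub_le_sq_of_robinSecular_eq_zero (by positivity) hx ⟨hb0, hbπ⟩ ?_⟩
    rw [show 2 * π / (2 * π / (μ * L)) = μ * L by field_simp]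
    exact robinSecular_eq_zero (by positivity) hb0.ne' (by rw [heq]; ring)
  refine ⟨IsBigO.of_bound ((2 * π / L) ^ 2) ?_, 4 * π / L, by positivity, ?_⟩
  · filter_upwards [hbound] with μ ⟨hμ0, _, h⟩
    rw [norm_eq_abs, norm_of_nonneg (by positivity)]
    convert h using 1
    field_simp
  · filter_upwards [hbound] with μ ⟨hμ0, hx, h⟩
    have hx0 : 0 < 2 * π / (μ * L) := by positivity
    calc π - β μ ≤ 2 * π / (μ * L) + (2 * π / (μ * L)) ^ 2 := by linarith [(abs_le.mp h).2]
      _ ≤ 2 * (2 * π / (μ * L)) := by nlinarith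
      _ = 4 * π / L / μ := by field_simp; ring
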